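/- Let t₁,…,t_d ∈ ℤ_{≥2} be pairwise coprime, L = t₁⋯t_d, and S = ⟨L/t₁,…,L/t_d⟩. For any k ∈ ℕ, the Euler characteristic of Δ_{kL}^S equals (−1)^k·C(d−1,k); in particular χ(Δ_{kL}) = 0 precisely when k ≥ d. -/
import Mathlib


open scoped Classical

/-- A numerical semigroup: a cofinite additive submonoid of ℕ. -/
def IsNumericalSemigroup (S : Set ℕ) : Prop :=
  0 ∈ S ∧ (∀ a ∈ S, ∀ b ∈ S, a + b ∈ S) ∧ Sᶜ.Finite

/-- The set of nonnegative integer combinations of `n 0, …, n (d-1)`. -/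
def genBy {d : ℕ} (n : Fin d → ℕ) : Set ℕ :=
  {m | ∃ a : Fin d → ℕ, m = ∑ i, a i * n i}

/-- `n` lists the (distinct) minimal generators of `S`: they generate `S` and each is
irreducible (nonzero and not a sum of two nonzero elements of `S`). -/
def IsMinGen {d : ℕ} (S : Set ℕ) (n : Fin d → ℕ) : Prop :=
  S = genBy n ∧ Function.Injective n ∧
    ∀ i, n i ≠ 0 ∧ ¬∃ a ∈ S, ∃ b ∈ S, a ≠ 0 ∧ b ≠ 0 ∧ n i = a + b

/-- The squarefree divisor complex of `m` in `S` w.r.t. the generators `n`: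
faces are the `F ⊆ [d]` with `m - ∑_{i ∈ F} n i ∈ S`. -/
def sdc {d : ℕ} (S : Set ℕ) (n : Fin d → ℕ) (m : ℕ) : Set (Finset (Fin d)) :=
  {F | ∃ s ∈ S, m = ∑ i ∈ F, n i + s}

/-- Euler characteristic of the squarefree divisor complex. -/
noncomputable def eulerChar {d : ℕ} (S : Set ℕ) (n : Fin d → ℕ) (m : ℕ) : ℤ :=
  ∑ F : Finset (Fin d), if F ∈ sdc S n m then (-1 : ℤ) ^ F.card else 0

/-- The set of pseudo-Frobenius numbers of `S` (as integers). -/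
def PF (S : Set ℕ) : Set ℤ :=
  {x | (¬∃ y ∈ S, (y : ℤ) = x) ∧ ∀ s ∈ S, s ≠ 0 → ∃ y ∈ S, (y : ℤ) = x + s}

lemma n_eq_prod {d : ℕ} (t : Fin d → ℕ) (ht : ∀ i, 2 ≤ t i) (i : Fin d) :
    (∏ j, t j) / t i = ∏ j ∈ Finset.univ.erase i, t j := by
  rw [← Finset.mul_prod_erase Finset.univ t (Finset.mem_univ i)]
  exact Nat.mul_div_cancel_left _ (lt_of_lt_of_le two_pos (ht i))

lemma mul_n {d : ℕ} (t : Fin d → ℕ) (ht : ∀ i, 2 ≤ t i) (i : Fin d) :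
    t i * ((∏ j, t j) / t i) = ∏ j, t j := by
  rw [n_eq_prod t ht i, Finset.mul_prod_erase Finset.univ t (Finset.mem_univ i)]

lemma dvd_n {d : ℕ} (t : Fin d → ℕ) (ht : ∀ i, 2 ≤ t i) {i j : Fin d} (h : i ≠ j) :
    t i ∣ (∏ l, t l) / t j := by
  rw [n_eq_prod t ht j]
  exact Finset.dvd_prod_of_mem t (by simp [h])

lemma cop_n {d : ℕ} (t : Fin d → ℕ) (ht : ∀ i, 2 ≤ t i)
    (hcop : ∀ i j, i ≠ j → Nat.Coprime (t i) (t j)) (i : Fin d) :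
    Nat.Coprime (t i) ((∏ j, t j) / t i) := by
  rw [n_eq_prod t ht i]
  exact Nat.Coprime.prod_right fun j hj => hcop i j (by simp at hj; exact Ne.symm hj)

lemma mem_sdc_iff {d : ℕ} (hd : 0 < d) (t : Fin d → ℕ) (ht : ∀ i, 2 ≤ t i)
    (hcop : ∀ i j, i ≠ j → Nat.Coprime (t i) (t j)) (k : ℕ) (F : Finset (Fin d)) :
    F ∈ sdc (genBy fun i => (∏ j, t j) / t i) (fun i => (∏ j, t j) / t i)
      (k * ∏ j, t j) ↔ F.card ≤ k := by
  set L := ∏ j, t j with hL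
  set n : Fin d → ℕ := fun i => L / t i with hn
  have hmulN : ∀ i, t i * n i = L := mul_n t ht
  constructor
  · rintro ⟨s, ⟨a, rfl⟩, heq⟩
    set b : Fin d → ℕ := fun i => a i + if i ∈ F then 1 else 0 with hb
    have hsum : k * L = ∑ i, b i * n i := by
      have : ∑ i, b i * n i = (∑ i, a i * n i) + ∑ i ∈ F, n i := by
        simp only [hb, add_mul, Finset.sum_add_distrib, ite_mul, one_mul, zero_mul]
        rw [Finset.sum_ite_mem, Finset.univ_inter]
      rw [this, heq]; ring
    have hdvd : ∀ i, t i ∣ b i := by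
      intro i
      have h1 : t i ∣ ∑ j ∈ Finset.univ.erase i, b j * n j :=
        Finset.dvd_sum fun j hj => Dvd.dvd.mul_left
          (dvd_n t ht (by simp at hj; exact Ne.symm hj)) _
      have h2 : t i ∣ k * L := Dvd.dvd.mul_left (Finset.dvd_prod_of_mem t (Finset.mem_univ i)) _
      rw [hsum, ← Finset.add_sum_erase Finset.univ (fun j => b j * n j) (Finset.mem_univ i),
        add_comm, Nat.dvd_add_right h1] at h2
      exact (Nat.Coprime.dvd_of_dvd_mul_right (cop_n t ht hcop i)) h2
    have hscale : ∀ i, b i * n i = (b i / t i) * L := by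
      intro i
      obtain ⟨c, hc⟩ := hdvd i
      rw [hc, Nat.mul_div_cancel_left c (lt_of_lt_of_le two_pos (ht i)), mul_comm (t i) c,
        mul_assoc, hmulN i]
    have hkL : k * L = (∑ i, b i / t i) * L := by
      rw [hsum, Finset.sum_mul]; exact Finset.sum_congr rfl fun i _ => hscale i
    have hLpos : 0 < L := Finset.prod_pos fun i _ => lt_of_lt_of_le two_pos (ht i)
    have hk : k = ∑ i, b i / t i := Nat.eq_of_mul_eq_mul_right hLpos hkL
    have hone : ∀ i ∈ F, 1 ≤ b i / t i := by
      intro i hi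
      rcases Nat.eq_zero_or_pos (b i / t i) with h | h
      · exfalso
        obtain ⟨c, hc⟩ := hdvd i
        rw [hc, Nat.mul_div_cancel_left c (lt_of_lt_of_le two_pos (ht i))] at h
        have hb0 : b i = 0 := by rw [hc, h, mul_zero]
        have : a i + 1 = 0 := by simp [hb, hi] at hb0
        omega
      · exact h
    calc F.card = ∑ i ∈ F, 1 := by simp
      _ ≤ ∑ i ∈ F, b i / t i := Finset.sum_le_sum hone
      _ ≤ ∑ i, b i / t i := Finset.sum_le_sum_of_subset (Finset.subset_univ F)
      _ = k := hk.symm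
  · intro hk
    have i0 : Fin d := ⟨0, hd⟩
    set a : Fin d → ℕ := fun i =>
      (if i ∈ F then t i - 1 else 0) + (if i = i0 then (k - F.card) * t i0 else 0) with ha
    refine ⟨∑ i, a i * n i, ⟨a, rfl⟩, ?_⟩
    have h1 : ∑ i, a i * n i =
        (∑ i ∈ F, (t i - 1) * n i) + (k - F.card) * t i0 * n i0 := by
      simp only [ha, add_mul, Finset.sum_add_distrib, ite_mul, zero_mul]
      rw [Finset.sum_ite_mem, Finset.univ_inter, Finset.sum_ite_eq' Finset.univ i0]
      simp
    rw [h1, ← add_assoc, ← Finset.sum_add_distrib]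
    have h2 : ∀ i ∈ F, n i + (t i - 1) * n i = t i * n i := by
      intro i _
      have h21 : t i - 1 + 1 = t i := by have := ht i; omega
      calc n i + (t i - 1) * n i = (t i - 1 + 1) * n i := by ring
        _ = t i * n i := by rw [h21]
    rw [Finset.sum_congr rfl h2]
    rw [Finset.sum_congr rfl (fun i _ => hmulN i), Finset.sum_const, smul_eq_mul,
      mul_assoc, hmulN i0]
    rw [← add_mul]
    congr 1
    omega

lemma alt_sum {d : ℕ} (hd : 0 < d) (k : ℕ) :
    ∑ j ∈ Finset.range (k + 1), (-1 : ℤ) ^ j * (d.choose j : ℤ) =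
      (-1 : ℤ) ^ k * ((d - 1).choose k : ℤ) := by
  induction k with
  | zero => simp
  | succ k ih =>
    rw [Finset.sum_range_succ, ih]
    obtain ⟨e, rfl⟩ : ∃ e, d = e + 1 := ⟨d - 1, by omega⟩
    simp only [Nat.add_sub_cancel] at *
    rw [Nat.choose_succ_succ e k]
    push_cast
    ring


/-- For a supersymmetric semigroup, `χ(Δ_{kL}) = (-1)^k C(d-1, k)`, which is zero
precisely when `k ≥ d`. -/
theorem supersymmetric_eulerChar {d : ℕ} (hd : 0 < d) (t : Fin d → ℕ) (ht : ∀ i, 2 ≤ t i)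
    (hcop : ∀ i j, i ≠ j → Nat.Coprime (t i) (t j)) (k : ℕ) :
    eulerChar (genBy fun i => (∏ j, t j) / t i) (fun i => (∏ j, t j) / t i)
        (k * ∏ j, t j) = (-1 : ℤ) ^ k * ((d - 1).choose k : ℤ) ∧
    (eulerChar (genBy fun i => (∏ j, t j) / t i) (fun i => (∏ j, t j) / t i)
        (k * ∏ j, t j) = 0 ↔ d ≤ k) := by
  have hmain : eulerChar (genBy fun i => (∏ j, t j) / t i) (fun i => (∏ j, t j) / t i)
      (k * ∏ j, t j) = (-1 : ℤ) ^ k * ((d - 1).choose k : ℤ) := by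
    unfold eulerChar
    have h1 : ∀ F : Finset (Fin d),
        (if F ∈ sdc (genBy fun i => (∏ j, t j) / t i) (fun i => (∏ j, t j) / t i)
            (k * ∏ j, t j) then (-1 : ℤ) ^ F.card else 0) =
          (if F.card ≤ k then (-1 : ℤ) ^ F.card else 0) := by
      intro F
      exact if_congr (mem_sdc_iff hd t ht hcop k F) rfl rfl
    rw [Finset.sum_congr rfl fun F _ => h1 F]
    rw [← Finset.powerset_univ, Finset.sum_powerset]
    have h2 : ∀ j ∈ Finset.range ((Finset.univ : Finset (Fin d)).card + 1),
        (∑ F ∈ Finset.powersetCard j (Finset.univ : Finset (Fin d)),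
          (if F.card ≤ k then (-1 : ℤ) ^ F.card else 0)) =
          (if j ≤ k then (-1 : ℤ) ^ j * (d.choose j : ℤ) else 0) := by
      intro j _
      have : ∀ F ∈ Finset.powersetCard j (Finset.univ : Finset (Fin d)),
          (if F.card ≤ k then (-1 : ℤ) ^ F.card else 0) =
            (if j ≤ k then (-1 : ℤ) ^ j else 0) := by
        intro F hF
        rw [(Finset.mem_powersetCard.mp hF).2]
      rw [Finset.sum_congr rfl this, Finset.sum_const, Finset.card_powersetCard,
        Finset.card_univ, Fintype.card_fin]
      split <;> simp [mul_comm]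
    rw [Finset.sum_congr rfl h2, Finset.card_univ, Fintype.card_fin]
    have key : (∑ j ∈ Finset.range (d + 1),
        if j ≤ k then (-1 : ℤ) ^ j * (d.choose j : ℤ) else 0) =
        ∑ j ∈ Finset.range (k + 1), (-1 : ℤ) ^ j * (d.choose j : ℤ) := by
      rcases le_or_gt k d with h | h
      · rw [← Finset.sum_subset (Finset.range_subset_range.mpr (by omega) :
            Finset.range (k + 1) ⊆ Finset.range (d + 1))
            (fun j _ hj2 => if_neg (by simp at hj2; omega))]
        exact Finset.sum_congr rfl fun j hj =>
          if_pos (by simp [Nat.lt_succ_iff] at hj; omega)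
      · rw [Finset.sum_congr rfl (fun j hj => if_pos (by simp [Nat.lt_succ_iff] at hj; omega) :
          ∀ j ∈ Finset.range (d + 1), (if j ≤ k then (-1 : ℤ) ^ j * (d.choose j : ℤ) else 0)
            = (-1 : ℤ) ^ j * (d.choose j : ℤ))]
        exact Finset.sum_subset (Finset.range_subset_range.mpr (by omega))
          (fun j hj hj2 => by
            simp only [Finset.mem_range] at hj hj2
            rw [Nat.choose_eq_zero_iff.mpr (by omega)]
            simp)
    rw [key, alt_sum hd k]
  refine ⟨hmain, ?_⟩
  rw [hmain, mul_eq_zero]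
  have hne : ((-1 : ℤ) ^ k ≠ 0) := by positivity
  simp only [hne, false_or]
  rw [Int.natCast_eq_zero, Nat.choose_eq_zero_iff]
  omega
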